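/- Let m ≥ 2, β > 1 satisfy β^m = β^{m-1} + ⋯ + β + 1, and ρ = 1/β. Let n = m+1 and ε, ε' ∈ {−1,+1}^{m+1} with ε < ε' lexicographically. Then Σ_{j=1}^{m+1} ε_j ρ^j ≤ Σ_{j=1}^{m+1} ε'_j ρ^j, with equality if and only if ε = (−1,+1,…,+1) and ε' = (+1,−1,…,−1). -/

import Mathlib

/-!
Dividing `β ^ m = ∑_{j<m} β ^ j` by `β ^ m` gives `∑_{i=1}^m ρ ^ i = 1`, hence the tail bound
`∑_{k<j≤m} ρ ^ (j+1) ≤ ρ ^ (k+1)`, with equality only for `k = 0`. If `ε` and `ε'` first differ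
at `k`, then `ε' - ε` is `2` at `k` and at least `-2` afterwards, so the difference of the two sums
is at least `2 (ρ ^ (k+1) - ∑_{k<j≤m} ρ ^ (j+1)) ≥ 0`. Equality forces `k = 0` and
`ε' j - ε j = -2` for all `j > 0`.
-/

open Finset

lemma sum_range_inv_pow_succ_eq_one {β : ℝ} {m : ℕ} (hβ0 : β ≠ 0)
    (hβ : β ^ m = ∑ j ∈ range m, β ^ j) : ∑ i ∈ range m, β⁻¹ ^ (i + 1) = 1 := by
  have hβm : β ^ m ≠ 0 := pow_ne_zero m hβ0
  have hterm : ∀ i ∈ range m, β⁻¹ ^ (i + 1) * β ^ m = β ^ (m - 1 - i) := fun i hi => by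
    rw [show m - 1 - i = m - (i + 1) by omega, pow_sub₀ β hβ0 (mem_range.mp hi), inv_pow,
      mul_comm]
  rw [← mul_left_inj' hβm, one_mul, sum_mul, sum_congr rfl hterm, sum_range_reflect, hβ]

section Tail

variable {ρ : ℝ} {m : ℕ}

lemma strictMono_sum_range_pow_succ (hρ : 0 < ρ) :
    StrictMono fun n => ∑ i ∈ range n, ρ ^ (i + 1) :=
  strictMono_nat_of_lt_succ fun n => by
    simpa [sum_range_succ] using pow_pos hρ (n + 1)

lemma sum_Ioo_pow_succ_eq_mul (k : ℕ) :
    ∑ j ∈ Ioo k (m + 1), ρ ^ (j + 1) = ρ ^ (k + 1) * ∑ i ∈ range (m - k), ρ ^ (i + 1) := by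
  rw [← Finset.Ico_add_one_left_eq_Ioo, sum_Ico_eq_sum_range, mul_sum, Nat.add_sub_add_right]
  exact sum_congr rfl fun i _ => by ring

variable (hρ : 0 < ρ) (hsum : ∑ i ∈ range m, ρ ^ (i + 1) = 1)
include hρ hsum

lemma sum_Ioo_pow_succ_le (k : ℕ) : ∑ j ∈ Ioo k (m + 1), ρ ^ (j + 1) ≤ ρ ^ (k + 1) := by
  rw [sum_Ioo_pow_succ_eq_mul]
  refine mul_le_of_le_one_right (by positivity) ?_
  exact hsum ▸ (strictMono_sum_range_pow_succ hρ).monotone (Nat.sub_le m k)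

lemma sum_Ioo_pow_succ_eq_iff (k : ℕ) :
    ∑ j ∈ Ioo k (m + 1), ρ ^ (j + 1) = ρ ^ (k + 1) ↔ k = 0 := by
  have hm : m ≠ 0 := by rintro rfl; simp at hsum
  rw [sum_Ioo_pow_succ_eq_mul, mul_eq_left₀ (by positivity), ← hsum,
    (strictMono_sum_range_pow_succ hρ).injective.eq_iff]
  omega

end Tail

section Lex

variable {ι : Type*} [LinearOrder ι]

/-- The pointwise smallest `ε' - ε` for sign vectors first differing at `k`. -/
def lexMinDiff (k j : ι) : ℝ := if j < k then 0 else if j = k then 2 else -2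

variable {k : ι} {d : ι → ℝ}

lemma lexMinDiff_le (hlt : ∀ j < k, d j = 0) (hk : d k = 2) (hge : ∀ j, -2 ≤ d j) (j : ι) :
    lexMinDiff k j ≤ d j := by
  rcases lt_trichotomy j k with h | rfl | h
  · simp [lexMinDiff, h, hlt j h]
  · simp [lexMinDiff, hk]
  · simpa [lexMinDiff, h.not_gt, h.ne'] using hge j

lemma lexMinDiff_eq_iff (hlt : ∀ j < k, d j = 0) (hk : d k = 2) :
    (∀ j, lexMinDiff k j = d j) ↔ ∀ j, k < j → d j = -2 := by
  refine ⟨fun h j hj => ?_, fun h j => ?_⟩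
  · simpa [lexMinDiff, hj.not_gt, hj.ne'] using (h j).symm
  · rcases lt_trichotomy j k with hj | rfl | hj
    · simp [lexMinDiff, hj, hlt j hj]
    · simp [lexMinDiff, hk]
    · simp [lexMinDiff, hj.not_gt, hj.ne', h j hj]

variable [Fintype ι] [LocallyFiniteOrderTop ι] {w : ι → ℝ}

lemma sum_lexMinDiff_mul :
    ∑ j, lexMinDiff k j * w j = 2 * (w k - ∑ j ∈ Ioi k, w j) := by
  have hsplit : ∀ j, lexMinDiff k j * w j =
      (if j = k then 2 * w j else 0) - (if k < j then 2 * w j else 0) := fun j => by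
    rcases lt_trichotomy j k with h | rfl | h
    · simp [lexMinDiff, h, h.ne, h.not_gt]
    · simp [lexMinDiff]
    · simp [lexMinDiff, h, h.ne', h.not_gt]
  simp only [hsplit, sum_sub_distrib, sum_ite_eq', mem_univ, if_true, ← sum_filter,
    filter_lt_eq_Ioi, ← mul_sum]
  ring

lemma le_sum_mul_of_lex (hw : ∀ j, 0 < w j) (hlt : ∀ j < k, d j = 0) (hk : d k = 2)
    (hge : ∀ j, -2 ≤ d j) : 2 * (w k - ∑ j ∈ Ioi k, w j) ≤ ∑ j, d j * w j := by
  rw [← sum_lexMinDiff_mul]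
  exact sum_le_sum fun j _ =>
    mul_le_mul_of_nonneg_right (lexMinDiff_le hlt hk hge j) (hw j).le

lemma sum_mul_eq_iff_of_lex (hw : ∀ j, 0 < w j) (hlt : ∀ j < k, d j = 0) (hk : d k = 2)
    (hge : ∀ j, -2 ≤ d j) :
    ∑ j, d j * w j = 2 * (w k - ∑ j ∈ Ioi k, w j) ↔ ∀ j, k < j → d j = -2 := by
  rw [← sum_lexMinDiff_mul, eq_comm, sum_eq_sum_iff_of_le fun j _ =>
    mul_le_mul_of_nonneg_right (lexMinDiff_le hlt hk hge j) (hw j).le, ← lexMinDiff_eq_iff hlt hk]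
  simp only [mem_univ, true_implies, mul_left_inj' (hw _).ne']

end Lex

lemma neg_two_le_sub_of_sign {a b : ℝ} (ha : a = 1 ∨ a = -1) (hb : b = 1 ∨ b = -1) :
    -2 ≤ b - a := by
  rcases ha with rfl | rfl <;> rcases hb with rfl | rfl <;> norm_num

lemma sub_eq_neg_two_iff_of_sign {a b : ℝ} (ha : a = 1 ∨ a = -1) (hb : b = 1 ∨ b = -1) :
    b - a = -2 ↔ a = 1 ∧ b = -1 := by
  rcases ha with rfl | rfl <;> rcases hb with rfl | rfl <;> norm_num

lemma eq_neg_one_and_eq_one_of_sign_lt {a b : ℝ} (ha : a = 1 ∨ a = -1) (hb : b = 1 ∨ b = -1)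
    (hab : a < b) : a = -1 ∧ b = 1 := by
  rcases ha with rfl | rfl <;> rcases hb with rfl | rfl <;> constructor <;> linarith

section FinSums

variable {m : ℕ} {ρ : ℝ} {k : Fin (m + 1)} {d : Fin (m + 1) → ℝ}

lemma sum_Ioi_pow_succ :
    ∑ j ∈ Ioi k, ρ ^ ((j : ℕ) + 1) = ∑ j ∈ Ioo (k : ℕ) (m + 1), ρ ^ (j + 1) := by
  rw [← Fin.map_valEmbedding_Ioi, sum_map]
  rfl

lemma sum_mul_pow_succ_nonneg_of_lex (hρ : 0 < ρ) (hsum : ∑ i ∈ range m, ρ ^ (i + 1) = 1)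
    (hlt : ∀ j < k, d j = 0) (hk : d k = 2) (hge : ∀ j, -2 ≤ d j) :
    0 ≤ ∑ j, d j * ρ ^ ((j : ℕ) + 1) := by
  have hle := le_sum_mul_of_lex (fun j : Fin (m + 1) => pow_pos hρ ((j : ℕ) + 1)) hlt hk hge
  rw [sum_Ioi_pow_succ] at hle
  linarith [sum_Ioo_pow_succ_le hρ hsum k]

lemma sum_mul_pow_succ_eq_zero_iff_of_lex (hρ : 0 < ρ) (hsum : ∑ i ∈ range m, ρ ^ (i + 1) = 1)
    (hlt : ∀ j < k, d j = 0) (hk : d k = 2) (hge : ∀ j, -2 ≤ d j) :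
    ∑ j, d j * ρ ^ ((j : ℕ) + 1) = 0 ↔ (k : ℕ) = 0 ∧ ∀ j, k < j → d j = -2 := by
  have hw : ∀ j : Fin (m + 1), 0 < ρ ^ ((j : ℕ) + 1) := fun j => pow_pos hρ _
  have hle := le_sum_mul_of_lex hw hlt hk hge
  have heq := sum_mul_eq_iff_of_lex hw hlt hk hge
  have hgap := sum_Ioo_pow_succ_le hρ hsum k
  rw [sum_Ioi_pow_succ] at hle heq
  rw [← heq, ← sum_Ioo_pow_succ_eq_iff hρ hsum k]
  constructor
  · intro h
    constructor <;> linarith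
  · rintro ⟨htail, hmin⟩
    linarith

end FinSums

lemma val_eq_zero_and_sub_eq_neg_two_iff {m : ℕ} {k : Fin (m + 1)} {ε ε' : Fin (m + 1) → ℝ}
    (hε : ∀ j, ε j = 1 ∨ ε j = -1) (hε' : ∀ j, ε' j = 1 ∨ ε' j = -1)
    (hεk : ε k = -1) (hε'k : ε' k = 1) :
    ((k : ℕ) = 0 ∧ ∀ j, k < j → (ε' - ε) j = -2) ↔
      (ε = fun j : Fin (m + 1) => if (j : ℕ) = 0 then (-1 : ℝ) else 1) ∧
      (ε' = fun j : Fin (m + 1) => if (j : ℕ) = 0 then (1 : ℝ) else -1) := by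
  have hk_lt : (k : ℕ) = 0 → ∀ j : Fin (m + 1), (j : ℕ) ≠ 0 → k < j := fun hk0 j hj => by
    rw [Fin.lt_def]
    omega
  constructor
  · rintro ⟨hk0, hflip⟩
    have hflip' : ∀ j, k < j → ε j = 1 ∧ ε' j = -1 := fun j hj =>
      (sub_eq_neg_two_iff_of_sign (hε j) (hε' j)).mp (hflip j hj)
    constructor <;> funext j <;> split_ifs with hj
    · rwa [Fin.ext (hj.trans hk0.symm)]
    · exact (hflip' j (hk_lt hk0 j hj)).1
    · rwa [Fin.ext (hj.trans hk0.symm)]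
    · exact (hflip' j (hk_lt hk0 j hj)).2
  · rintro ⟨rfl, rfl⟩
    have hk0 : (k : ℕ) = 0 := by
      by_contra h
      norm_num [h] at hεk
    refine ⟨hk0, fun j hj => ?_⟩
    have hj0 : (j : ℕ) ≠ 0 := by rw [Fin.lt_def] at hj; omega
    simp only [Pi.sub_apply, if_neg hj0]
    norm_num

theorem stmt_5_general (m : ℕ) (β : ℝ) (hβ1 : 1 < β)
    (hβ : β ^ m = ∑ j ∈ Finset.range m, β ^ j) (ρ : ℝ) (hρ : ρ = 1 / β)
    (ε ε' : Fin (m + 1) → ℝ)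
    (hε : ∀ j, ε j = 1 ∨ ε j = -1) (hε' : ∀ j, ε' j = 1 ∨ ε' j = -1)
    (hlex : ∃ k : Fin (m + 1), (∀ j, j < k → ε j = ε' j) ∧ ε k < ε' k) :
    ∑ j, ε j * ρ ^ ((j : ℕ) + 1) ≤ ∑ j, ε' j * ρ ^ ((j : ℕ) + 1) ∧
    ((∑ j, ε j * ρ ^ ((j : ℕ) + 1)) = ∑ j, ε' j * ρ ^ ((j : ℕ) + 1) ↔
      (ε = fun j : Fin (m + 1) => if (j : ℕ) = 0 then (-1 : ℝ) else 1) ∧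
      (ε' = fun j : Fin (m + 1) => if (j : ℕ) = 0 then (1 : ℝ) else -1)) := by
  obtain ⟨k, hagree, hk⟩ := hlex
  have hρ0 : 0 < ρ := by rw [hρ]; positivity
  have hsum : ∑ i ∈ range m, ρ ^ (i + 1) = 1 := by
    rw [hρ, one_div]
    exact sum_range_inv_pow_succ_eq_one (by positivity) hβ
  obtain ⟨hεk, hε'k⟩ := eq_neg_one_and_eq_one_of_sign_lt (hε k) (hε' k) hk
  have hlt : ∀ j < k, (ε' - ε) j = 0 := fun j hj => by simp [hagree j hj]
  have hdk : (ε' - ε) k = 2 := by norm_num [hεk, hε'k]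
  have hge : ∀ j, -2 ≤ (ε' - ε) j := fun j => neg_two_le_sub_of_sign (hε j) (hε' j)
  have hdiff : ∑ j, ε' j * ρ ^ ((j : ℕ) + 1) - ∑ j, ε j * ρ ^ ((j : ℕ) + 1) =
      ∑ j, (ε' - ε) j * ρ ^ ((j : ℕ) + 1) := by
    simp only [Pi.sub_apply, sub_mul, sum_sub_distrib]
  refine ⟨sub_nonneg.mp (hdiff ▸ sum_mul_pow_succ_nonneg_of_lex hρ0 hsum hlt hdk hge), ?_⟩
  rw [eq_comm, ← sub_eq_zero, hdiff, sum_mul_pow_succ_eq_zero_iff_of_lex hρ0 hsum hlt hdk hge]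
  exact val_eq_zero_and_sub_eq_neg_two_iff hε hε' hεk hε'k

theorem stmt_5 (m : ℕ) (hm : 2 ≤ m) (β : ℝ) (hβ1 : 1 < β)
    (hβ : β ^ m = ∑ j ∈ Finset.range m, β ^ j) (ρ : ℝ) (hρ : ρ = 1 / β)
    (ε ε' : Fin (m + 1) → ℝ)
    (hε : ∀ j, ε j = 1 ∨ ε j = -1) (hε' : ∀ j, ε' j = 1 ∨ ε' j = -1)
    (hlex : ∃ k : Fin (m + 1), (∀ j, j < k → ε j = ε' j) ∧ ε k < ε' k) :
    ∑ j, ε j * ρ ^ ((j : ℕ) + 1) ≤ ∑ j, ε' j * ρ ^ ((j : ℕ) + 1) ∧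
    ((∑ j, ε j * ρ ^ ((j : ℕ) + 1)) = ∑ j, ε' j * ρ ^ ((j : ℕ) + 1) ↔
      (ε = fun j : Fin (m + 1) => if (j : ℕ) = 0 then (-1 : ℝ) else 1) ∧
      (ε' = fun j : Fin (m + 1) => if (j : ℕ) = 0 then (1 : ℝ) else -1)) :=
  stmt_5_general m β hβ1 hβ ρ hρ ε ε' hε hε' hlex
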